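/- arXiv:1902.08078 — 2 statements merged into one kernel-verified Lean document; each statement's English description precedes it below -/
import Mathlib

section
/- Let n ≥ 1 and let (d_k)_{k=0}^{n} be a positive, strictly increasing sequence (d_0 < d_1 < ⋯ < d_n) satisfying (2σ−1) d_n − σ d_{n−1} > 0 for some σ ∈ (1/2, 1). Then for any real numbers y^0, y^1, …, y^{n+1}: 2 (σ y^{n+1} + (1−σ) y^n) · Σ_{k=0}^{n} d_k (y^{k+1} − y^k) ≥ Σ_{k=0}^{n} d_k ((y^{k+1})² − (y^k)²). -/
/-!
With `v = σ y^{n+1} + (1-σ) y^n` and `c_k = (v - y^k)²`, each summand of the difference of the two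
sides is `d_k (c_k - c_{k+1})`, because `(2v - a - b)(b - a) = (v - a)² - (v - b)²`. Summing by parts,
the terms up to `k = n - 1` contribute at least `-d_{n-1} c_n` since `d` is nonnegative and
nondecreasing. As `v - y^n = σ Δ` and `v - y^{n+1} = -(1-σ) Δ` with `Δ = y^{n+1} - y^n`, what remains is
`((2σ-1) d_n - σ² d_{n-1}) Δ² ≥ ((2σ-1) d_n - σ d_{n-1}) Δ² ≥ 0`.
-/

open Finset

theorem neg_mul_le_sum_mul_sub_succ {R : Type*} [CommRing R] [LinearOrder R] [IsStrictOrderedRing R]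
    (d c : ℕ → R) (m : ℕ) (hd₀ : 0 ≤ d 0) (hmono : ∀ k < m, d k ≤ d (k + 1))
    (hc : ∀ k ≤ m, 0 ≤ c k) :
    -(d m * c (m + 1)) ≤ ∑ k ∈ range (m + 1), d k * (c k - c (k + 1)) := by
  induction m with
  | zero =>
    rw [sum_range_one, mul_sub]
    linarith [mul_nonneg hd₀ (hc 0 le_rfl)]
  | succ m ih =>
    have ih := ih (fun k hk => hmono k (by omega)) (fun k hk => hc k (by omega))
    have hstep : 0 ≤ (d (m + 1) - d m) * c (m + 1) :=
      mul_nonneg (sub_nonneg.2 (hmono m (by omega))) (hc _ le_rfl)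
    rw [sum_range_succ]
    linarith

theorem stmt_8 (n : ℕ) (hn : 1 ≤ n) (d : ℕ → ℝ) (σ : ℝ)
    (hσ : σ ∈ Set.Ioo (1/2 : ℝ) 1)
    (hpos : ∀ k ≤ n, 0 < d k)
    (hmono : ∀ k, k < n → d k < d (k+1))
    (hlast : 0 < (2*σ - 1) * d n - σ * d (n-1))
    (y : ℕ → ℝ) :
    2 * (σ * y (n+1) + (1-σ) * y n) * ∑ k ∈ Finset.range (n+1), d k * (y (k+1) - y k)
      ≥ ∑ k ∈ Finset.range (n+1), d k * ((y (k+1))^2 - (y k)^2) := by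
  obtain ⟨hσ₀, hσ₁⟩ := hσ
  obtain ⟨m, rfl⟩ : ∃ m, n = m + 1 := ⟨n - 1, by omega⟩
  rw [Nat.add_sub_cancel] at hlast
  set v := σ * y (m + 1 + 1) + (1 - σ) * y (m + 1)
  set c : ℕ → ℝ := fun k => (v - y k) ^ 2
  have htelescope : 2 * v * ∑ k ∈ range (m + 1 + 1), d k * (y (k + 1) - y k)
      - ∑ k ∈ range (m + 1 + 1), d k * (y (k + 1) ^ 2 - y k ^ 2)
      = ∑ k ∈ range (m + 1 + 1), d k * (c k - c (k + 1)) := by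
    rw [mul_sum, ← sum_sub_distrib]
    exact sum_congr rfl fun k _ => by ring
  have hhistory := neg_mul_le_sum_mul_sub_succ d c m (hpos 0 (by omega)).le
    (fun k hk => (hmono k (by omega)).le) (fun k _ => sq_nonneg _)
  have hboundary : 0 ≤ -(d m * c (m + 1)) + d (m + 1) * (c (m + 1) - c (m + 1 + 1)) := by
    have hform : -(d m * c (m + 1)) + d (m + 1) * (c (m + 1) - c (m + 1 + 1))
        = ((2 * σ - 1) * d (m + 1) - σ ^ 2 * d m) * (y (m + 1 + 1) - y (m + 1)) ^ 2 := by
      simp only [c, v]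
      ring
    rw [hform]
    refine mul_nonneg ?_ (sq_nonneg _)
    have hσ_sq : σ ^ 2 * d m ≤ σ * d m := by
      nlinarith [mul_nonneg (mul_nonneg (by linarith : (0 : ℝ) ≤ σ) (by linarith : (0 : ℝ) ≤ 1 - σ))
        (hpos m (by omega)).le]
    linarith
  linarith [sum_range_succ (fun k => d k * (c k - c (k + 1))) (m + 1)]
end

section
/- Let n ≥ 1, σ ∈ (1/2,1), and suppose the coefficients g_k^{(n+1)} (k = 0,…,n) and g_k^{(n)} (k = 0,…,n−1) satisfy g_k^{(n+1)} = g_{k−1}^{(n)} for 2 ≤ k ≤ n, and are positive, strictly increasing in k with (2σ−1) g_n^{(n+1)} − σ g_{n−1}^{(n+1)} > 0. Then for any real sequence v^{1−σ}, v^{2−σ}, …, v^{n+1−σ} and any reals v^{−σ}, F: 2(σ v^{n+1−σ} + (1−σ) v^{n−σ}) · [Σ_{k=0}^{n} g_k^{(n+1)} (v^{k+1−σ} − v^{k−σ}) − F] ≥ Σ_{k=0}^{n} g_k^{(n+1)} (v^{k+1−σ})² − Σ_{k=0}^{n−1} g_k^{(n)} (v^{k+1−σ})² − (g_1^{(n+1)}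 − g_0^{(n)}) (v^{1−σ})² − g_0^{(n+1)} (v^{−σ} + F/g_0^{(n+1)})². -/
/-!
With `z = σ yₙ₊₁ + (1-σ) yₙ`, the defect `2z ∑ dₖ (yₖ₊₁ - yₖ) - ∑ dₖ (yₖ₊₁² - yₖ²)` equals
`∑ dₖ ((z - yₖ)² - (z - yₖ₊₁)²)`. Summation by parts turns this into
`d₀ (z - y₀)² + ∑ (dₖ₊₁ - dₖ)(z - yₖ₊₁)² - dₙ (z - yₙ₊₁)²`, whose terms are nonnegative
except for the last one; since `z - yₙ = σ δ` and `z - yₙ₊₁ = -(1-σ) δ` with `δ = yₙ₊₁ - yₙ`,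
the final term and the last term of the middle sum combine to `δ² ((2σ-1) dₙ - σ² dₙ₋₁) ≥ 0`.
The theorem is this inequality for `dₖ = g_k^{(n+1)}`, `yₖ = v^{k-σ}` (`k ≥ 1`) and `y₀ = v^{-σ} + F / g_0^{(n+1)}`; the shift
`g_k^{(n+1)} = g_{k-1}^{(n)}` rewrites `∑ dₖ yₖ²` in terms of the weights `g^{(n)}`.
-/

open Finset

lemma sum_range_mul_sub_succ (d a : ℕ → ℝ) (n : ℕ) :
    ∑ k ∈ range (n + 1), d k * (a k - a (k + 1))
      = d 0 * a 0 + ∑ k ∈ range n, (d (k + 1) - d k) * a (k + 1) - d n * a (n + 1) := by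
  induction n with
  | zero => simp [mul_sub]
  | succ m ih =>
    rw [sum_range_succ, ih, sum_range_succ]
    ring

/-- Alikhanov's inequality, stated for `n = m + 1`. -/
lemma alikhanov_inequality {σ : ℝ} (hσ : σ ∈ Set.Icc 0 1) (m : ℕ) {d : ℕ → ℝ}
    (hd0 : 0 ≤ d 0) (hmono : ∀ k < m, d k ≤ d (k + 1))
    (hlast : σ * d m ≤ (2 * σ - 1) * d (m + 1)) (y : ℕ → ℝ) :
    ∑ k ∈ range (m + 2), d k * (y (k + 1) ^ 2 - y k ^ 2)
      ≤ 2 * (σ * y (m + 2) + (1 - σ) * y (m + 1))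
          * ∑ k ∈ range (m + 2), d k * (y (k + 1) - y k) := by
  obtain ⟨hσ0, hσ1⟩ := hσ
  set z := σ * y (m + 2) + (1 - σ) * y (m + 1)
  set a : ℕ → ℝ := fun k => (z - y k) ^ 2
  have hdefect : 2 * z * ∑ k ∈ range (m + 2), d k * (y (k + 1) - y k)
      - ∑ k ∈ range (m + 2), d k * (y (k + 1) ^ 2 - y k ^ 2)
      = ∑ k ∈ range (m + 2), d k * (a k - a (k + 1)) := by
    rw [mul_sum, ← sum_sub_distrib]
    exact sum_congr rfl fun k _ => by ring
  have hd_nonneg : ∀ k ≤ m, 0 ≤ d k := by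
    intro k hk
    induction k with
    | zero => exact hd0
    | succ j ih => exact (ih (by omega)).trans (hmono j (by omega))
  have hmiddle : 0 ≤ ∑ k ∈ range m, (d (k + 1) - d k) * a (k + 1) :=
    sum_nonneg fun k hk =>
      mul_nonneg (sub_nonneg.2 (hmono k (mem_range.1 hk))) (sq_nonneg _)
  have htail : 0 ≤ (d (m + 1) - d m) * a (m + 1) - d (m + 1) * a (m + 2) := by
    have hσ_sq : σ ^ 2 * d m ≤ σ * d m := by
      nlinarith [mul_nonneg (mul_nonneg hσ0 (sub_nonneg.2 hσ1)) (hd_nonneg m le_rfl)]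
    have hsplit : (d (m + 1) - d m) * a (m + 1) - d (m + 1) * a (m + 2)
        = ((2 * σ - 1) * d (m + 1) - σ ^ 2 * d m) * (y (m + 2) - y (m + 1)) ^ 2 := by
      simp only [a, z]
      ring
    rw [hsplit]
    exact mul_nonneg (sub_nonneg.2 (hσ_sq.trans hlast)) (sq_nonneg _)
  rw [← sub_nonneg, hdefect, sum_range_mul_sub_succ, sum_range_succ]
  linarith [mul_nonneg hd0 (sq_nonneg (z - y 0))]

lemma sum_range_eq_of_shift {n : ℕ} (hn : 1 ≤ n) {g₁ g₀ : ℕ → ℝ}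
    (hshift : ∀ k, 2 ≤ k → k ≤ n → g₁ k = g₀ (k - 1)) (w : ℕ → ℝ) :
    ∑ k ∈ range (n + 1), g₁ k * w k
      = g₁ 0 * w 0 + (g₁ 1 - g₀ 0) * w 1 + ∑ k ∈ range n, g₀ k * w (k + 1) := by
  obtain ⟨m, rfl⟩ := Nat.exists_eq_add_of_le' hn
  rw [sum_range_succ', sum_range_succ', sum_range_succ' (fun k => g₀ k * w (k + 1))]
  have hbulk : ∑ k ∈ range m, g₁ (k + 1 + 1) * w (k + 1 + 1)
      = ∑ k ∈ range m, g₀ (k + 1) * w (k + 1 + 1) :=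
    sum_congr rfl fun k hk => by
      rw [hshift (k + 2) (by omega) (by simp at hk; omega)]
      rfl
  rw [hbulk]
  ring

theorem stmt_15_general (n : ℕ) (hn : 1 ≤ n) (σ : ℝ) (hσ : σ ∈ Set.Ioo (1/2 : ℝ) 1)
    (g1 g0 : ℕ → ℝ)
    (hshift : ∀ k, 2 ≤ k → k ≤ n → g1 k = g0 (k-1))
    (hpos1 : ∀ k ≤ n, 0 < g1 k)
    (hmono1 : ∀ k, k < n → g1 k < g1 (k+1))
    (hlast : 0 < (2*σ - 1) * g1 n - σ * g1 (n-1))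
    (v : ℕ → ℝ) (vm F : ℝ) :
    2 * (σ * v (n+1) + (1-σ) * v n)
        * ((g1 0 * (v 1 - vm) + ∑ k ∈ Finset.Icc 1 n, g1 k * (v (k+1) - v k)) - F)
      ≥ ∑ k ∈ Finset.range (n+1), g1 k * (v (k+1))^2
        - ∑ k ∈ Finset.range n, g0 k * (v (k+1))^2
        - (g1 1 - g0 0) * (v 1)^2
        - g1 0 * (vm + F / g1 0)^2 := by
  have hg0 : g1 0 ≠ 0 := (hpos1 0 (by omega)).ne'
  set y := Function.update v 0 (vm + F / g1 0)
  have hy : ∀ k, k ≠ 0 → y k = v k := fun k hk => Function.update_of_ne hk _ _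
  have hlhs : ∑ k ∈ range (n + 1), g1 k * (y (k + 1) - y k)
      = g1 0 * (v 1 - vm) + ∑ k ∈ Icc 1 n, g1 k * (v (k + 1) - v k) - F := by
    rw [sum_range_eq_add_Ico _ (by omega), Ico_add_one_right_eq_Icc]
    rw [sum_congr rfl fun k hk => by rw [hy k (by simp at hk; omega), hy (k + 1) (by omega)]]
    simp only [y, Function.update_self, hy 1 one_ne_zero]
    field_simp
    ring
  have hrhs : ∑ k ∈ range (n + 1), g1 k * (y (k + 1) ^ 2 - y k ^ 2)
      = ∑ k ∈ range (n + 1), g1 k * v (k + 1) ^ 2 - ∑ k ∈ range n, g0 k * v (k + 1) ^ 2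
        - (g1 1 - g0 0) * v 1 ^ 2 - g1 0 * (vm + F / g1 0) ^ 2 := by
    simp only [mul_sub, sum_sub_distrib, sum_range_eq_of_shift hn hshift, hy _ (Nat.succ_ne_zero _)]
    simp only [y, Function.update_self]
    ring
  obtain ⟨m, rfl⟩ := Nat.exists_eq_add_of_le' hn
  have key := alikhanov_inequality ⟨by linarith [hσ.1], hσ.2.le⟩ m (hpos1 0 (by omega)).le
    (fun k hk => (hmono1 k (by omega)).le) (by simp at hlast; linarith) y
  rw [hlhs, hrhs, hy (m + 1) (by omega)] at key
  exact key

theorem stmt_15 (n : ℕ) (hn : 1 ≤ n) (σ : ℝ) (hσ : σ ∈ Set.Ioo (1/2 : ℝ) 1)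
    (g1 g0 : ℕ → ℝ)
    (hshift : ∀ k, 2 ≤ k → k ≤ n → g1 k = g0 (k-1))
    (hpos1 : ∀ k ≤ n, 0 < g1 k) (hpos0 : ∀ k ≤ n - 1, 0 < g0 k)
    (hmono1 : ∀ k, k < n → g1 k < g1 (k+1))
    (hmono0 : ∀ k, k < n - 1 → g0 k < g0 (k+1))
    (hlast : 0 < (2*σ - 1) * g1 n - σ * g1 (n-1))
    (v : ℕ → ℝ) (vm F : ℝ) :
    2 * (σ * v (n+1) + (1-σ) * v n)
        * ((g1 0 * (v 1 - vm) + ∑ k ∈ Finset.Icc 1 n, g1 k * (v (k+1) - v k)) - F)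
      ≥ ∑ k ∈ Finset.range (n+1), g1 k * (v (k+1))^2
        - ∑ k ∈ Finset.range n, g0 k * (v (k+1))^2
        - (g1 1 - g0 0) * (v 1)^2
        - g1 0 * (vm + F / g1 0)^2 :=
  stmt_15_general n hn σ hσ g1 g0 hshift hpos1 hmono1 hlast v vm F
end
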